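/- Define triangle_m(i,j,k) iff turn_m(i,j,k-2m) holds, (i,j,k) ≠ (2m,2m,2m), and sign_m(i) = sign_m(j) = sign_m(k). Then triangle_m(i,j,k) holds if and only if there exist α ∈ [i]_m, β ∈ [j]_m, γ ∈ [k]_m which are the signed angles of a (possibly degenerate) triple of pairwise distinct points in ℝ², i.e., α+β+γ ≡ π (mod 2π), all of the same sign (with π and 0 having sign 0), and not all three equal to π. -/
import Mathlib


open Real Complex

/-- The OPRA_m sector `[i]_m` as a subset of the circle `ℝ/2πℤ` (`Real.Angle`):
an open arc if `i` is odd, a single point if `i` is even. -/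
noncomputable def sector (m : ℕ) (i : ZMod (4*m)) : Set Real.Angle :=
  if Odd i.val then
    (fun r : ℝ => (r : Real.Angle)) ''
      Set.Ioo (2*π*((i.val : ℝ)-1)/(4*m)) (2*π*((i.val : ℝ)+1)/(4*m))
  else {((2*π*(i.val : ℝ)/(4*m) : ℝ) : Real.Angle)}

/-- The direction angle `φ_XY` of the vector `Y - X`, as an element of the circle. -/
noncomputable def phiAngle (X Y : ℂ) : Real.Angle := (Complex.arg (Y - X) : Real.Angle)

/-- An o-point: a point of the plane (modeled as `ℂ`) with an orientation. -/
abbrev OPoint := ℂ × Real.Angle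

/-- The distinct-position OPRA_m base relation `A ∠_i^j B`. -/
noncomputable def oprarel (m : ℕ) (i j : ZMod (4*m)) (A B : OPoint) : Prop :=
  A.1 ≠ B.1 ∧ phiAngle A.1 B.1 - A.2 ∈ sector m i ∧ phiAngle B.1 A.1 - B.2 ∈ sector m j

/-- The same-position OPRA_m base relation `A ∠i B`. -/
noncomputable def oprasame (m : ℕ) (i : ZMod (4*m)) (A B : OPoint) : Prop :=
  A.1 = B.1 ∧ B.2 - A.2 ∈ sector m i

/-- `turn_m(i,j,k)`. -/
def turnRel (m : ℕ) (i j k : ZMod (4*m)) : Prop :=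
  if Odd i.val ∧ Odd j.val then i + j + k = 0 ∨ i + j + k = 1 ∨ i + j + k = -1
  else i + j + k = 0

/-- `sign_m(i)`. -/
def signm (m : ℕ) (i : ZMod (4*m)) : ℤ :=
  if i.val = 0 ∨ i.val = 2*m then 0 else if i.val < 2*m then 1 else -1

/-- `triangle_m(i,j,k)`. -/
def triRel (m : ℕ) (i j k : ZMod (4*m)) : Prop :=
  turnRel m i j (k - ((2*m : ℕ) : ZMod (4*m))) ∧
  ¬(i = ((2*m : ℕ) : ZMod (4*m)) ∧ j = ((2*m : ℕ) : ZMod (4*m)) ∧ k = ((2*m : ℕ) : ZMod (4*m))) ∧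
  signm m i = signm m j ∧ signm m j = signm m k

/-- The sign of an angle, where both `0` and `π` get sign `0`. -/
noncomputable def angsign (θ : Real.Angle) : ℤ := by
  classical exact if θ.toReal = 0 ∨ θ.toReal = π then 0 else if 0 < θ.toReal then 1 else -1

/-! ### Auxiliary lemmas -/

lemma mem_sector_iff (m : ℕ) (hm : 1 ≤ m) (i : ZMod (4*m)) (θ : Real.Angle) :
    θ ∈ sector m i ↔ ∃ a : ℝ,
      θ = ((2*π*a/(4*(m:ℝ)) : ℝ) : Real.Angle) ∧
      (Odd i.val → ((i.val:ℝ)-1 < a ∧ a < (i.val:ℝ)+1)) ∧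
      (¬ Odd i.val → a = (i.val:ℝ)) := by
  have hm' : (1:ℝ) ≤ (m:ℝ) := by exact_mod_cast hm
  have hm0 : (0:ℝ) < 4*(m:ℝ) := by linarith
  have h2π : (0:ℝ) < 2*π := by positivity
  unfold sector
  by_cases h : Odd i.val
  · simp only [if_pos h]
    constructor
    · rintro ⟨r, ⟨hr1, hr2⟩, rfl⟩
      refine ⟨r * (4*(m:ℝ)) / (2*π), ?_, fun _ => ⟨?_, ?_⟩, fun hc => absurd h hc⟩
      · congr 1
        field_simp
      · rw [lt_div_iff₀ h2π]
        have := (div_lt_iff₀ hm0).mp hr1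
        linarith [this, mul_comm ((i.val:ℝ)-1) (2*π)]
      · rw [div_lt_iff₀ h2π]
        have := (lt_div_iff₀ hm0).mp hr2
        nlinarith
    · rintro ⟨a, rfl, hodd, _⟩
      obtain ⟨ha1, ha2⟩ := hodd h
      refine ⟨2*π*a/(4*(m:ℝ)), ⟨?_, ?_⟩, rfl⟩
      · gcongr
      · gcongr
  · simp only [if_neg h, Set.mem_singleton_iff]
    constructor
    · intro hθ
      exact ⟨(i.val:ℝ), hθ, fun ho => absurd ho h, fun _ => rfl⟩
    · rintro ⟨a, rfl, _, he⟩
      rw [he h]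

lemma sum_eq_pi_iff (m : ℕ) (hm : 1 ≤ m) (a b g : ℝ) :
    (((2*π*a/(4*(m:ℝ)) : ℝ) : Real.Angle) + ((2*π*b/(4*(m:ℝ)) : ℝ) : Real.Angle)
      + ((2*π*g/(4*(m:ℝ)) : ℝ) : Real.Angle) = ((π:ℝ) : Real.Angle)) ↔
    ∃ t : ℤ, a + b + g = 2*(m:ℝ) + 4*(m:ℝ)*t := by
  have hm' : (1:ℝ) ≤ (m:ℝ) := by exact_mod_cast hm
  have hm0 : (0:ℝ) < 4*(m:ℝ) := by linarith
  have hπ : (0:ℝ) < π := Real.pi_pos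
  rw [← Real.Angle.coe_add, ← Real.Angle.coe_add, Real.Angle.angle_eq_iff_two_pi_dvd_sub]
  constructor
  · rintro ⟨t, ht⟩
    refine ⟨t, ?_⟩
    have hc : (0:ℝ) < 2*π/(4*(m:ℝ)) := by positivity
    apply mul_left_cancel₀ (ne_of_gt hc)
    have hR : 2*π/(4*(m:ℝ)) * (2*(m:ℝ)+4*(m:ℝ)*t) = π + 2*π*t := by
      field_simp
      ring
    have hL : 2*π/(4*(m:ℝ)) * (a+b+g) = 2*π*a/(4*(m:ℝ)) + 2*π*b/(4*(m:ℝ)) + 2*π*g/(4*(m:ℝ)) := by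
      ring
    rw [hR, hL]
    linarith
  · rintro ⟨t, ht⟩
    refine ⟨t, ?_⟩
    have : 2*π*a/(4*(m:ℝ)) + 2*π*b/(4*(m:ℝ)) + 2*π*g/(4*(m:ℝ))
        = 2*π*(a+b+g)/(4*(m:ℝ)) := by ring
    rw [this, ht]
    field_simp
    ring

lemma angsign_of_sin_pos (θ : Real.Angle) (h : 0 < θ.sin) : angsign θ = 1 := by
  have h1 : 0 < Real.sin θ.toReal := by rw [Real.Angle.sin_toReal]; exact h
  have h2 : θ.toReal ≠ 0 := by intro e; rw [e] at h1; simp at h1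
  have h3 : θ.toReal ≠ π := by intro e; rw [e] at h1; simp at h1
  have h4 : 0 < θ.toReal := by
    by_contra hc
    push_neg at hc
    have := Real.sin_nonpos_of_nonpos_of_neg_pi_le hc (le_of_lt θ.neg_pi_lt_toReal)
    linarith
  unfold angsign
  rw [if_neg (by tauto), if_pos h4]

lemma angsign_of_sin_neg (θ : Real.Angle) (h : θ.sin < 0) : angsign θ = -1 := by
  have h1 : Real.sin θ.toReal < 0 := by rw [Real.Angle.sin_toReal]; exact h
  have h2 : θ.toReal ≠ 0 := by intro e; rw [e] at h1; simp at h1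
  have h3 : θ.toReal ≠ π := by intro e; rw [e] at h1; simp at h1
  have h4 : ¬ (0 < θ.toReal) := by
    intro hc
    have := Real.sin_nonneg_of_nonneg_of_le_pi (le_of_lt hc) θ.toReal_le_pi
    linarith
  unfold angsign
  rw [if_neg (by tauto), if_neg h4]

lemma angsign_zero : angsign 0 = 0 := by
  unfold angsign
  rw [if_pos (Or.inl Real.Angle.toReal_zero)]

lemma angsign_pi : angsign ((π:ℝ) : Real.Angle) = 0 := by
  unfold angsign
  rw [if_pos (Or.inr Real.Angle.toReal_pi)]

lemma sin_key_pos (m : ℕ) (hm : 1 ≤ m) (a : ℝ) (h1 : 0 < a) (h2 : a < 2*m) :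
    0 < Real.sin (2*π*a/(4*(m:ℝ))) := by
  have hm' : (1:ℝ) ≤ (m:ℝ) := by exact_mod_cast hm
  have hπ : (0:ℝ) < π := Real.pi_pos
  apply Real.sin_pos_of_pos_of_lt_pi
  · positivity
  · rw [div_lt_iff₀ (by linarith : (0:ℝ) < 4*(m:ℝ))]
    nlinarith

lemma sin_key_neg (m : ℕ) (hm : 1 ≤ m) (a : ℝ) (h1 : 2*m < a) (h2 : a < 4*m) :
    Real.sin (2*π*a/(4*(m:ℝ))) < 0 := by
  have hm' : (1:ℝ) ≤ (m:ℝ) := by exact_mod_cast hm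
  have hπ : (0:ℝ) < π := Real.pi_pos
  have hpos : 0 < Real.sin (2*π*a/(4*(m:ℝ)) - π) := by
    apply Real.sin_pos_of_pos_of_lt_pi
    · rw [sub_pos, lt_div_iff₀ (by linarith : (0:ℝ) < 4*(m:ℝ))]
      nlinarith
    · rw [sub_lt_iff_lt_add, div_lt_iff₀ (by linarith : (0:ℝ) < 4*(m:ℝ))]
      nlinarith
  have := Real.sin_sub_pi (2*π*a/(4*(m:ℝ)))
  linarith

lemma angsign_sector (m : ℕ) (hm : 1 ≤ m) (i : ZMod (4*m)) (θ : Real.Angle)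
    (hθ : θ ∈ sector m i) : angsign θ = signm m i := by
  haveI : NeZero (4*m) := ⟨by omega⟩
  obtain ⟨a, rfl, hodd, heven⟩ := (mem_sector_iff m hm i θ).mp hθ
  have hvlt : i.val < 4*m := ZMod.val_lt i
  have hm' : (1:ℝ) ≤ (m:ℝ) := by exact_mod_cast hm
  by_cases h : Odd i.val
  · obtain ⟨ha1, ha2⟩ := hodd h
    have hv1 : 1 ≤ i.val := Nat.one_le_iff_ne_zero.mpr (by
      intro e; rw [e] at h; simp at h)
    have hvp : i.val % 2 = 1 := Nat.odd_iff.mp h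
    have hne0 : ¬(i.val = 0 ∨ i.val = 2*m) := by omega
    unfold signm
    rw [if_neg hne0]
    by_cases hv : i.val < 2*m
    · rw [if_pos hv]
      apply angsign_of_sin_pos
      rw [Real.Angle.sin_coe]
      apply sin_key_pos m hm
      · have : (1:ℝ) ≤ (i.val:ℝ) := by exact_mod_cast hv1
        linarith
      · have : (i.val:ℝ) + 1 ≤ 2*(m:ℝ) := by exact_mod_cast Nat.succ_le_of_lt hv
        linarith
    · rw [if_neg hv]
      apply angsign_of_sin_neg
      rw [Real.Angle.sin_coe]
      apply sin_key_neg m hm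
      · have h2m1 : 2*m + 1 ≤ i.val := by omega
        have : 2*(m:ℝ) + 1 ≤ (i.val:ℝ) := by exact_mod_cast h2m1
        linarith
      · have : (i.val:ℝ) + 1 ≤ 4*(m:ℝ) := by exact_mod_cast Nat.succ_le_of_lt hvlt
        linarith
  · have ha : a = (i.val:ℝ) := heven h
    subst ha
    have hvp : i.val % 2 = 0 := Nat.even_iff.mp (Nat.not_odd_iff_even.mp h)
    unfold signm
    by_cases h0 : i.val = 0
    · rw [if_pos (Or.inl h0), h0]
      have : (2*π*((0:ℕ):ℝ)/(4*(m:ℝ)) : ℝ) = 0 := by norm_num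
      rw [this]
      exact_mod_cast angsign_zero
    · by_cases h2m : i.val = 2*m
      · rw [if_pos (Or.inr h2m), h2m]
        have : (2*π*((2*m:ℕ):ℝ)/(4*(m:ℝ)) : ℝ) = π := by
          push_cast
          field_simp
          ring
        rw [this]
        exact angsign_pi
      · rw [if_neg (by tauto)]
        by_cases hv : i.val < 2*m
        · rw [if_pos hv]
          apply angsign_of_sin_pos
          rw [Real.Angle.sin_coe]
          apply sin_key_pos m hm
          · have : 1 ≤ i.val := Nat.one_le_iff_ne_zero.mpr h0
            have : (1:ℝ) ≤ (i.val:ℝ) := by exact_mod_cast this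
            linarith
          · exact_mod_cast hv
        · rw [if_neg hv]
          apply angsign_of_sin_neg
          rw [Real.Angle.sin_coe]
          apply sin_key_neg m hm
          · have : 2*m < i.val := by omega
            exact_mod_cast this
          · exact_mod_cast hvlt

lemma coe_eq_pi_iff (m : ℕ) (hm : 1 ≤ m) (a : ℝ) :
    (((2*π*a/(4*(m:ℝ)) : ℝ) : Real.Angle) = ((π:ℝ) : Real.Angle)) ↔
    ∃ t : ℤ, a = 2*(m:ℝ) + 4*(m:ℝ)*t := by
  have h0 : ((2*π*(0:ℝ)/(4*(m:ℝ)) : ℝ) : Real.Angle) = 0 := by norm_num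
  have := sum_eq_pi_iff m hm a 0 0
  rw [h0, add_zero, add_zero] at this
  simpa using this

lemma pi_mem_sector_iff (m : ℕ) (hm : 1 ≤ m) (i : ZMod (4*m)) :
    ((π:ℝ) : Real.Angle) ∈ sector m i ↔ i = ((2*m : ℕ) : ZMod (4*m)) := by
  haveI : NeZero (4*m) := ⟨by omega⟩
  have hvlt : i.val < 4*m := ZMod.val_lt i
  rw [mem_sector_iff m hm]
  constructor
  · rintro ⟨a, ha, hodd, heven⟩
    obtain ⟨t, rfl⟩ := (coe_eq_pi_iff m hm a).mp ha.symm
    have hm1 : (1:ℝ) ≤ (m:ℝ) := by exact_mod_cast hm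
    have hvltR : (i.val:ℝ) ≤ 4*(m:ℝ) - 1 := by
      have : i.val + 1 ≤ 4*m := hvlt
      have := (by exact_mod_cast this : (i.val:ℝ) + 1 ≤ 4*(m:ℝ))
      linarith
    have ht0 : t = 0 := by
      by_contra hc
      rcases lt_or_gt_of_ne hc with h1 | h1
      · have h1' : t ≤ -1 := by omega
        have : (t:ℝ) ≤ -1 := by exact_mod_cast h1'
        have hle : 2*(m:ℝ) + 4*(m:ℝ)*t ≤ -2*(m:ℝ) := by nlinarith
        by_cases h : Odd i.val
        · obtain ⟨hb1, _⟩ := hodd h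
          have : (0:ℝ) ≤ (i.val:ℝ) := by positivity
          linarith
        · have := heven h
          have : (0:ℝ) ≤ (i.val:ℝ) := by positivity
          linarith
      · have : (1:ℝ) ≤ (t:ℝ) := by exact_mod_cast h1
        have hle : 6*(m:ℝ) ≤ 2*(m:ℝ) + 4*(m:ℝ)*t := by nlinarith
        by_cases h : Odd i.val
        · obtain ⟨_, hb2⟩ := hodd h
          linarith
        · have := heven h
          linarith
    rw [ht0] at hodd heven
    simp only [Int.cast_zero, mul_zero, add_zero] at hodd heven
    by_cases h : Odd i.val
    · obtain ⟨hb1, hb2⟩ := hodd h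
      have hgt : 2*m - 1 < i.val ∧ i.val < 2*m + 1 := by
        constructor
        · by_contra hc
          push_neg at hc
          have : (i.val:ℝ) ≤ 2*(m:ℝ) - 1 := by
            have h2 : (i.val:ℕ) ≤ 2*m-1 := hc
            have := (by exact_mod_cast h2 : (i.val:ℝ) ≤ ((2*m-1 : ℕ):ℝ))
            have h3 : ((2*m-1:ℕ):ℝ) = 2*(m:ℝ)-1 := by
              have : (1:ℕ) ≤ 2*m := by omega
              push_cast [Nat.cast_sub this]
              ring
            linarith
          linarith
        · by_contra hc
          push_neg at hc
          have : 2*(m:ℝ)+1 ≤ (i.val:ℝ) := by exact_mod_cast hc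
          linarith
      have : i.val = 2*m := by omega
      have hvp := Nat.odd_iff.mp h
      omega
    · have hv : (i.val:ℝ) = 2*(m:ℝ) := (heven h).symm
      have hv2 : i.val = 2*m := by exact_mod_cast hv
      have : ((i.val:ℕ) : ZMod (4*m)) = i := by
        rw [ZMod.natCast_val, ZMod.cast_id]
      rw [← this, hv2]
  · rintro rfl
    have hv : ((2*m:ℕ) : ZMod (4*m)).val = 2*m := ZMod.val_natCast_of_lt (by omega)
    refine ⟨(2*m : ℕ), ?_, ?_, fun _ => by rw [hv]⟩
    · symm
      rw [coe_eq_pi_iff m hm]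
      exact ⟨0, by push_cast; ring⟩
    · intro ho
      rw [hv] at ho
      simp [Nat.odd_iff] at ho

lemma mem_sector_two_m (m : ℕ) (hm : 1 ≤ m) (θ : Real.Angle)
    (hθ : θ ∈ sector m ((2*m : ℕ) : ZMod (4*m))) : θ = ((π:ℝ) : Real.Angle) := by
  haveI : NeZero (4*m) := ⟨by omega⟩
  obtain ⟨a, rfl, _, heven⟩ := (mem_sector_iff m hm _ θ).mp hθ
  have hv : ((2*m:ℕ) : ZMod (4*m)).val = 2*m := ZMod.val_natCast_of_lt (by omega)
  have hno : ¬ Odd ((2*m:ℕ) : ZMod (4*m)).val := by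
    rw [hv]; simp [Nat.odd_iff]
  have ha := heven hno
  rw [hv] at ha
  rw [coe_eq_pi_iff m hm]
  exact ⟨0, by rw [ha]; push_cast; ring⟩

lemma intCast_eq_iff' (m : ℕ) (hm : 1 ≤ m) (z e : ℤ) :
    ((z : ZMod (4*m)) = (e : ZMod (4*m))) ↔ ∃ t : ℤ, z = e + 4*m*t := by
  rw [ZMod.intCast_eq_intCast_iff, Int.modEq_iff_dvd]
  constructor
  · rintro ⟨t, ht⟩
    refine ⟨-t, ?_⟩
    have : e - z = (4*m : ℤ)*t := by exact_mod_cast ht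
    push_cast
    linarith
  · rintro ⟨t, rfl⟩
    refine ⟨-t, ?_⟩
    push_cast
    ring

lemma sum_cast (m : ℕ) (hm : 1 ≤ m) (i j k : ZMod (4*m)) :
    i + j + (k - ((2*m:ℕ):ZMod (4*m)))
      = ((((i.val:ℤ) + (j.val:ℤ) + (k.val:ℤ) - 2*m : ℤ)) : ZMod (4*m)) := by
  haveI : NeZero (4*m) := ⟨by omega⟩
  have hi : ((i.val : ℕ) : ZMod (4*m)) = i := by rw [ZMod.natCast_val, ZMod.cast_id]
  have hj : ((j.val : ℕ) : ZMod (4*m)) = j := by rw [ZMod.natCast_val, ZMod.cast_id]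
  have hk : ((k.val : ℕ) : ZMod (4*m)) = k := by rw [ZMod.natCast_val, ZMod.cast_id]
  push_cast
  rw [hi, hj, hk]
  ring

lemma turnRel_iff (m : ℕ) (hm : 1 ≤ m) (i j k : ZMod (4*m)) :
    turnRel m i j (k - ((2*m:ℕ):ZMod (4*m))) ↔
      ∃ s t : ℤ, (i.val:ℤ) + (j.val:ℤ) + (k.val:ℤ) - 2*m = s + 4*m*t ∧
        ((Odd i.val ∧ Odd j.val ∧ (s = 0 ∨ s = 1 ∨ s = -1)) ∨ s = 0) := by
  have hez : ∀ (e z : ℤ), ((z : ZMod (4*m)) = (e : ZMod (4*m))) ↔ ∃ t : ℤ, z = e + 4*m*t :=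
    fun e z => intCast_eq_iff' m hm z e
  unfold turnRel
  rw [sum_cast m hm]
  by_cases hodd : Odd i.val ∧ Odd j.val
  · rw [if_pos hodd]
    constructor
    · rintro (h | h | h)
      · rw [show (0 : ZMod (4*m)) = ((0:ℤ) : ZMod (4*m)) by norm_num] at h
        obtain ⟨t, ht⟩ := (hez 0 _).mp h
        exact ⟨0, t, by linarith, Or.inl ⟨hodd.1, hodd.2, Or.inl rfl⟩⟩
      · rw [show (1 : ZMod (4*m)) = ((1:ℤ) : ZMod (4*m)) by norm_num] at h
        obtain ⟨t, ht⟩ := (hez 1 _).mp h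
        exact ⟨1, t, by linarith, Or.inl ⟨hodd.1, hodd.2, Or.inr (Or.inl rfl)⟩⟩
      · rw [show (-1 : ZMod (4*m)) = ((-1:ℤ) : ZMod (4*m)) by norm_num] at h
        obtain ⟨t, ht⟩ := (hez (-1) _).mp h
        exact ⟨-1, t, by linarith, Or.inl ⟨hodd.1, hodd.2, Or.inr (Or.inr rfl)⟩⟩
    · rintro ⟨s, t, ht, hs⟩
      have hs' : s = 0 ∨ s = 1 ∨ s = -1 := by tauto
      rcases hs' with rfl | rfl | rfl
      · exact Or.inl (by
          rw [show (0 : ZMod (4*m)) = ((0:ℤ) : ZMod (4*m)) by norm_num]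
          exact (hez 0 _).mpr ⟨t, by linarith⟩)
      · exact Or.inr (Or.inl (by
          rw [show (1 : ZMod (4*m)) = ((1:ℤ) : ZMod (4*m)) by norm_num]
          exact (hez 1 _).mpr ⟨t, by linarith⟩))
      · exact Or.inr (Or.inr (by
          rw [show (-1 : ZMod (4*m)) = ((-1:ℤ) : ZMod (4*m)) by norm_num]
          exact (hez (-1) _).mpr ⟨t, by linarith⟩))
  · rw [if_neg hodd]
    constructor
    · intro h
      rw [show (0 : ZMod (4*m)) = ((0:ℤ) : ZMod (4*m)) by norm_num] at h
      obtain ⟨t, ht⟩ := (hez 0 _).mp h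
      exact ⟨0, t, by linarith, Or.inr rfl⟩
    · rintro ⟨s, t, ht, hs⟩
      have hs' : s = 0 := by tauto
      subst hs'
      rw [show (0 : ZMod (4*m)) = ((0:ℤ) : ZMod (4*m)) by norm_num]
      exact (hez 0 _).mpr ⟨t, by linarith⟩

/-- characterization of `triangle_m`. -/
theorem stmt9 (m : ℕ) (hm : 1 ≤ m) (i j k : ZMod (4*m)) :
    triRel m i j k ↔
      ∃ α ∈ sector m i, ∃ β ∈ sector m j, ∃ γ ∈ sector m k,
        α + β + γ = ((π : ℝ) : Real.Angle) ∧
        angsign α = angsign β ∧ angsign β = angsign γ ∧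
        ¬(α = ((π : ℝ) : Real.Angle) ∧ β = ((π : ℝ) : Real.Angle) ∧
          γ = ((π : ℝ) : Real.Angle)) := by
  haveI : NeZero (4*m) := ⟨by omega⟩
  have hm1 : (1:ℝ) ≤ (m:ℝ) := by exact_mod_cast hm
  have mkmem : ∀ (x : ZMod (4*m)) (a : ℝ),
      ((x.val:ℝ) - 1 < a ∧ a < (x.val:ℝ) + 1) → (¬ Odd x.val → a = (x.val:ℝ)) →
      (((2*π*a/(4*(m:ℝ)) : ℝ)) : Real.Angle) ∈ sector m x :=
    fun x a h1 h2 => (mem_sector_iff m hm x _).mpr ⟨a, rfl, fun _ => h1, h2⟩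
  constructor
  · rintro ⟨hturn, hne, hs1, hs2⟩
    obtain ⟨s, t, hst, hd⟩ := (turnRel_iff m hm i j k).mp hturn
    have hcase : s = 0 ∨ ((s = 1 ∨ s = -1) ∧ Odd i.val ∧ Odd j.val) := by tauto
    have key : ∃ a b g : ℝ,
        (((2*π*a/(4*(m:ℝ)) : ℝ)) : Real.Angle) ∈ sector m i ∧
        (((2*π*b/(4*(m:ℝ)) : ℝ)) : Real.Angle) ∈ sector m j ∧
        (((2*π*g/(4*(m:ℝ)) : ℝ)) : Real.Angle) ∈ sector m k ∧
        a + b + g = 2*(m:ℝ) + 4*(m:ℝ)*t := by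
      rcases hcase with rfl | ⟨hs, o1, o2⟩
      · refine ⟨(i.val:ℝ), (j.val:ℝ), (k.val:ℝ),
          mkmem i _ ⟨by linarith, by linarith⟩ (fun _ => rfl),
          mkmem j _ ⟨by linarith, by linarith⟩ (fun _ => rfl),
          mkmem k _ ⟨by linarith, by linarith⟩ (fun _ => rfl), ?_⟩
        have hz : (i.val:ℤ) + (j.val:ℤ) + (k.val:ℤ) = 2*m + 4*m*t := by linarith
        exact_mod_cast hz
      · have habs : -1 < (s:ℝ)/2 ∧ (s:ℝ)/2 < 1 := by
          rcases hs with rfl | rfl <;> norm_num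
        refine ⟨(i.val:ℝ) - (s:ℝ)/2, (j.val:ℝ) - (s:ℝ)/2, (k.val:ℝ),
          mkmem i _ ⟨by linarith [habs.1, habs.2], by linarith [habs.1, habs.2]⟩
            (fun hno => absurd o1 hno),
          mkmem j _ ⟨by linarith [habs.1, habs.2], by linarith [habs.1, habs.2]⟩
            (fun hno => absurd o2 hno),
          mkmem k _ ⟨by linarith, by linarith⟩ (fun _ => rfl), ?_⟩
        have hstR : (i.val:ℝ) + (j.val:ℝ) + (k.val:ℝ) - 2*(m:ℝ) = (s:ℝ) + 4*(m:ℝ)*(t:ℝ) := by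
          exact_mod_cast hst
        linarith
    obtain ⟨a, b, g, hα, hβ, hγ, habg⟩ := key
    refine ⟨_, hα, _, hβ, _, hγ, (sum_eq_pi_iff m hm a b g).mpr ⟨t, habg⟩, ?_, ?_, ?_⟩
    · rw [angsign_sector m hm i _ hα, angsign_sector m hm j _ hβ]; exact hs1
    · rw [angsign_sector m hm j _ hβ, angsign_sector m hm k _ hγ]; exact hs2
    · rintro ⟨h1, h2, h3⟩
      exact hne ⟨(pi_mem_sector_iff m hm i).mp (h1 ▸ hα),
        (pi_mem_sector_iff m hm j).mp (h2 ▸ hβ),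
        (pi_mem_sector_iff m hm k).mp (h3 ▸ hγ)⟩
  · rintro ⟨α, hα, β, hβ, γ, hγ, hsum, hab, hbc, hnp⟩
    obtain ⟨a, hae, haodd, haeven⟩ := (mem_sector_iff m hm i α).mp hα
    obtain ⟨b, hbe, hbodd, hbeven⟩ := (mem_sector_iff m hm j β).mp hβ
    obtain ⟨g, hge, hgodd, hgeven⟩ := (mem_sector_iff m hm k γ).mp hγ
    rw [hae, hbe, hge] at hsum
    obtain ⟨t, habg⟩ := (sum_eq_pi_iff m hm a b g).mp hsum
    refine ⟨?_, ?_, ?_, ?_⟩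
    · apply (turnRel_iff m hm i j k).mpr
      set s : ℤ := (i.val:ℤ) + (j.val:ℤ) + (k.val:ℤ) - 2*m - 4*m*t with hsdef
      refine ⟨s, t, by rw [hsdef]; ring, ?_⟩
      have hsr : (s:ℝ) = ((i.val:ℝ) - a) + ((j.val:ℝ) - b) + ((k.val:ℝ) - g) := by
        rw [hsdef]; push_cast; linarith
      obtain ⟨u, hu⟩ : ∃ u : ℤ, 4*(m:ℤ)*t = 2*u := ⟨2*m*t, by ring⟩
      have hsdef2 : s = (i.val:ℤ) + (j.val:ℤ) + (k.val:ℤ) - 2*m - 2*u := by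
        rw [hsdef, hu]
      by_cases o1 : Odd i.val <;> by_cases o2 : Odd j.val <;> by_cases o3 : Odd k.val
      · obtain ⟨x1, x2⟩ := haodd o1
        obtain ⟨y1, y2⟩ := hbodd o2
        obtain ⟨z1, z2⟩ := hgodd o3
        have hb1 : (s:ℝ) < 3 := by linarith
        have hb2 : -3 < (s:ℝ) := by linarith
        have hz1 : s < 3 := by exact_mod_cast hb1
        have hz2 : -3 < s := by exact_mod_cast hb2
        have p1 := Nat.odd_iff.mp o1
        have p2 := Nat.odd_iff.mp o2
        have p3 := Nat.odd_iff.mp o3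
        exact Or.inl ⟨o1, o2, by omega⟩
      · obtain ⟨x1, x2⟩ := haodd o1
        obtain ⟨y1, y2⟩ := hbodd o2
        have z0 := hgeven o3
        have hb1 : (s:ℝ) < 2 := by linarith
        have hb2 : -2 < (s:ℝ) := by linarith
        have hz1 : s < 2 := by exact_mod_cast hb1
        have hz2 : -2 < s := by exact_mod_cast hb2
        have p1 := Nat.odd_iff.mp o1
        have p2 := Nat.odd_iff.mp o2
        have p3 := Nat.even_iff.mp (Nat.not_odd_iff_even.mp o3)
        exact Or.inr (by omega)
      · obtain ⟨x1, x2⟩ := haodd o1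
        have y0 := hbeven o2
        obtain ⟨z1, z2⟩ := hgodd o3
        have hb1 : (s:ℝ) < 2 := by linarith
        have hb2 : -2 < (s:ℝ) := by linarith
        have hz1 : s < 2 := by exact_mod_cast hb1
        have hz2 : -2 < s := by exact_mod_cast hb2
        have p1 := Nat.odd_iff.mp o1
        have p2 := Nat.even_iff.mp (Nat.not_odd_iff_even.mp o2)
        have p3 := Nat.odd_iff.mp o3
        exact Or.inr (by omega)
      · obtain ⟨x1, x2⟩ := haodd o1
        have y0 := hbeven o2
        have z0 := hgeven o3
        have hb1 : (s:ℝ) < 1 := by linarith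
        have hb2 : -1 < (s:ℝ) := by linarith
        have hz1 : s < 1 := by exact_mod_cast hb1
        have hz2 : -1 < s := by exact_mod_cast hb2
        have p1 := Nat.odd_iff.mp o1
        have p2 := Nat.even_iff.mp (Nat.not_odd_iff_even.mp o2)
        have p3 := Nat.even_iff.mp (Nat.not_odd_iff_even.mp o3)
        exact Or.inr (by omega)
      · have x0 := haeven o1
        obtain ⟨y1, y2⟩ := hbodd o2
        obtain ⟨z1, z2⟩ := hgodd o3
        have hb1 : (s:ℝ) < 2 := by linarith
        have hb2 : -2 < (s:ℝ) := by linarith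
        have hz1 : s < 2 := by exact_mod_cast hb1
        have hz2 : -2 < s := by exact_mod_cast hb2
        have p1 := Nat.even_iff.mp (Nat.not_odd_iff_even.mp o1)
        have p2 := Nat.odd_iff.mp o2
        have p3 := Nat.odd_iff.mp o3
        exact Or.inr (by omega)
      · have x0 := haeven o1
        obtain ⟨y1, y2⟩ := hbodd o2
        have z0 := hgeven o3
        have hb1 : (s:ℝ) < 1 := by linarith
        have hb2 : -1 < (s:ℝ) := by linarith
        have hz1 : s < 1 := by exact_mod_cast hb1
        have hz2 : -1 < s := by exact_mod_cast hb2
        have p1 := Nat.even_iff.mp (Nat.not_odd_iff_even.mp o1)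
        have p2 := Nat.odd_iff.mp o2
        have p3 := Nat.even_iff.mp (Nat.not_odd_iff_even.mp o3)
        exact Or.inr (by omega)
      · have x0 := haeven o1
        have y0 := hbeven o2
        obtain ⟨z1, z2⟩ := hgodd o3
        have hb1 : (s:ℝ) < 1 := by linarith
        have hb2 : -1 < (s:ℝ) := by linarith
        have hz1 : s < 1 := by exact_mod_cast hb1
        have hz2 : -1 < s := by exact_mod_cast hb2
        have p1 := Nat.even_iff.mp (Nat.not_odd_iff_even.mp o1)
        have p2 := Nat.even_iff.mp (Nat.not_odd_iff_even.mp o2)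
        have p3 := Nat.odd_iff.mp o3
        exact Or.inr (by omega)
      · have x0 := haeven o1
        have y0 := hbeven o2
        have z0 := hgeven o3
        have hb1 : (s:ℝ) = 0 := by linarith
        have hz1 : s = 0 := by exact_mod_cast hb1
        exact Or.inr hz1
    · rintro ⟨rfl, rfl, rfl⟩
      exact hnp ⟨mem_sector_two_m m hm α hα, mem_sector_two_m m hm β hβ,
        mem_sector_two_m m hm γ hγ⟩
    · rw [← angsign_sector m hm i α hα, ← angsign_sector m hm j β hβ]; exact hab
    · rw [← angsign_sector m hm j β hβ, ← angsign_sector m hm k γ hγ]; exact hbc
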